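/- arXiv:1909.02785 — 7 statements merged into one kernel-verified Lean document; each statement's English description precedes it below -/
import Mathlib

section
/- Let (I,≤) be a directed preordered set; for each i ∈ I let 𝒳_i be a locally convex real topological vector space; for i ≤ j let f_{i,j} : 𝒳_j → 𝒳_i be continuous linear maps with f_{i,i} = id and f_{i,k} = f_{i,j} ∘ f_{j,k} for i ≤ j ≤ k. Let 𝒳 = { x ∈ ∏_i 𝒳_i : f_{i,j}(x_j) = x_i for all i ≤ j } be the projective limit with coordinate projections f_i, equipped with the initial topology with respect to (f_i)_{i∈I}. Then the topological dual of 𝒳 is exactly { λ_i ∘ f_i : i ∈ I, λ_i a continuous linear functional on 𝒳_i }; that is, every continuous linear functional λ : 𝒳 → ℝ equals λ_i ∘ f_i for some i ∈ I and some continuous linear functional λ_i on 𝒳_i. -/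
open Filter Topology Pointwise

noncomputable section

variable {I : Type*} [Preorder I] {𝒳 : I → Type*} [∀ i, AddCommGroup (𝒳 i)]
  [∀ i, Module ℝ (𝒳 i)] [∀ i, TopologicalSpace (𝒳 i)]

/-- The projective limit of the system `(𝒳_i, f_{i,j})`, as a submodule of the product
`∏ i, 𝒳 i`.  Its subtype topology coincides with the initial topology with respect to the
canonical projections. -/
def projLimit (f : ∀ i j, i ≤ j → 𝒳 j →L[ℝ] 𝒳 i) : Submodule ℝ (∀ i, 𝒳 i) where
  carrier := {x | ∀ i j (h : i ≤ j), f i j h (x j) = x i}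
  add_mem' := fun ha hb i j h => by simp [map_add, ha i j h, hb i j h]
  zero_mem' := fun i j h => by simp
  smul_mem' := fun c a ha i j h => by simp [_root_.map_smul, ha i j h]

/-- The canonical projection `f_i` from the projective limit to `𝒳 i`. -/
def projLimit.proj (f : ∀ i j, i ≤ j → 𝒳 j →L[ℝ] 𝒳 i) (i : I) (x : projLimit f) : 𝒳 i :=
  (x : ∀ j, 𝒳 j) i

/-- The topological dual of a projective limit of locally convex spaces is exactly the set of
functionals of the form `λ_i ∘ f_i`, where `λ_i` is a continuous linear functional on `𝒳 i`. -/
theorem stmt2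
    [Nonempty I] [IsDirected I (· ≤ ·)]
    [∀ i, IsTopologicalAddGroup (𝒳 i)] [∀ i, ContinuousSMul ℝ (𝒳 i)]
    [∀ i, LocallyConvexSpace ℝ (𝒳 i)]
    (f : ∀ i j, i ≤ j → 𝒳 j →L[ℝ] 𝒳 i)
    (hfid : ∀ (i : I) (h : i ≤ i), f i i h = ContinuousLinearMap.id ℝ (𝒳 i))
    (hfcomp : ∀ (i j k : I) (hij : i ≤ j) (hjk : j ≤ k),
      f i k (hij.trans hjk) = (f i j hij).comp (f j k hjk)) :
    -- every continuous linear functional on the projective limit factors through some `f_i` …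
    (∀ lam : projLimit f →L[ℝ] ℝ, ∃ (i : I) (lamᵢ : 𝒳 i →L[ℝ] ℝ),
      ∀ x : projLimit f, lam x = lamᵢ (projLimit.proj f i x)) ∧
    -- … and conversely every such composition is a continuous linear functional:
    (∀ (i : I) (lamᵢ : 𝒳 i →L[ℝ] ℝ), ∃ lam : projLimit f →L[ℝ] ℝ,
      ∀ x : projLimit f, lam x = lamᵢ (projLimit.proj f i x)) := by
  constructor
  · intro lam
    -- the preimage of the unit ball is a neighborhood of 0
    have hball : (lam ⁻¹' Metric.ball 0 1) ∈ 𝓝 (0 : projLimit f) := by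
      have := lam.continuous.continuousAt (x := 0)
      rw [ContinuousAt, map_zero] at this
      exact this (Metric.ball_mem_nhds 0 one_pos)
    rw [nhds_subtype, Filter.mem_comap] at hball
    obtain ⟨S, hS, hSsub⟩ := hball
    rw [show ((0 : projLimit f) : ∀ i, 𝒳 i) = 0 from rfl, nhds_pi, Filter.mem_pi] at hS
    obtain ⟨F, hFfin, U, hU, hFU⟩ := hS
    obtain ⟨k, hk⟩ := hFfin.toFinset.exists_le
    -- the key neighborhood in 𝒳 k
    set V : Set (𝒳 k) := ⋂ i ∈ hFfin.toFinset, ⋂ (hik : i ≤ k), (f i k hik) ⁻¹' U i with hVdef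
    have hV : V ∈ 𝓝 (0 : 𝒳 k) := by
      refine (Filter.biInter_finset_mem _).2 fun i hi => ?_
      have heq : (⋂ (hik : i ≤ k), (f i k hik) ⁻¹' U i) = (f i k (hk i hi)) ⁻¹' U i := by
        ext y
        simp only [Set.mem_iInter, Set.mem_preimage]
        exact ⟨fun h => h (hk i hi), fun h _ => h⟩
      rw [heq]
      have : Filter.Tendsto (f i k (hk i hi)) (𝓝 0) (𝓝 0) := by
        have h := (f i k (hk i hi)).continuous.tendsto (0 : 𝒳 k)
        rwa [map_zero] at h
      exact this (hU i)
    -- key: if x.1 k ∈ V then |lam x| < 1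
    have key : ∀ x : projLimit f, (x : ∀ i, 𝒳 i) k ∈ V → |lam x| < 1 := by
      intro x hx
      have hmem : (x : ∀ i, 𝒳 i) ∈ F.pi U := by
        intro i hi
        have hi' : i ∈ hFfin.toFinset := hFfin.mem_toFinset.2 hi
        have hik := hk i hi'
        have hmV := Set.mem_iInter.1 (Set.mem_iInter₂.1 hx i hi') hik
        have hxc := x.2 i k hik
        rw [← hxc]
        exact hmV
      have := hSsub (hFU hmem)
      simpa [Real.norm_eq_abs] using this
    -- x_k = 0 implies lam x = 0
    set pm : projLimit f →ₗ[ℝ] 𝒳 k := (LinearMap.proj k).comp (projLimit f).subtype with hpm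
    have hV0 : (0 : 𝒳 k) ∈ V := mem_of_mem_nhds hV
    have hker : LinearMap.ker pm ≤ LinearMap.ker (lam : projLimit f →ₗ[ℝ] ℝ) := by
      intro x hx
      have hx0 : (x : ∀ i, 𝒳 i) k = 0 := hx
      have hsc : ∀ c : ℝ, |c| * |lam x| < 1 := by
        intro c
        have : ((c • x : projLimit f) : ∀ i, 𝒳 i) k = 0 := by
          simp [hx0]
        have := key (c • x) (this ▸ hV0)
        simpa [abs_mul] using this
      by_contra h
      have hne : lam x ≠ 0 := h
      have := hsc (2 / |lam x|)
      rw [abs_div, abs_abs, abs_two, div_mul_cancel₀] at this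
      · norm_num at this
      · exact abs_ne_zero.2 hne
    -- choose a balanced convex neighborhood inside V
    obtain ⟨W, ⟨hW𝓝, hWb, hWc⟩, hWV⟩ := (nhds_hasBasis_absConvex ℝ (𝒳 k)).mem_iff.1 hV
    have hWabs : Absorbent ℝ W := absorbent_nhds_zero hW𝓝
    -- bound: lam x ≤ gauge W (pm x)
    have hbound : ∀ x : projLimit f, lam x ≤ gauge W (pm x) := by
      intro x
      refine le_csInf hWabs.gauge_set_nonempty ?_
      rintro r ⟨hr, hxr⟩
      have hmem : pm (r⁻¹ • x) ∈ V := by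
        apply hWV
        have hm : r⁻¹ • pm x ∈ r⁻¹ • (r • W) := Set.smul_mem_smul_set hxr
        rw [smul_smul, inv_mul_cancel₀ hr.ne', one_smul] at hm
        show pm (r⁻¹ • x) ∈ W
        rw [map_smul]
        exact hm
      have := key (r⁻¹ • x) hmem
      have h1 : |r⁻¹ * lam x| < 1 := by simpa [map_smul] using this
      have : r⁻¹ * lam x < 1 := (abs_lt.1 h1).2
      calc lam x = r * (r⁻¹ * lam x) := by field_simp
        _ ≤ r * 1 := by nlinarith
        _ = r := mul_one r
    -- the functional on the range of pm
    set q : (projLimit f ⧸ LinearMap.ker pm) →ₗ[ℝ] ℝ :=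
      (LinearMap.ker pm).liftQ (lam : projLimit f →ₗ[ℝ] ℝ) hker with hq
    set e := LinearMap.quotKerEquivRange pm with he
    set g₀ : LinearMap.range pm →ₗ[ℝ] ℝ := q.comp e.symm.toLinearMap with hg₀
    have hg₀app : ∀ x : projLimit f, g₀ ⟨pm x, LinearMap.mem_range_self pm x⟩ = lam x := by
      intro x
      have h1 : e (Submodule.Quotient.mk x) = ⟨pm x, LinearMap.mem_range_self pm x⟩ :=
        Subtype.ext (LinearMap.quotKerEquivRange_apply_mk pm x)
      have h2 : e.symm ⟨pm x, LinearMap.mem_range_self pm x⟩ = Submodule.Quotient.mk x := by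
        rw [← h1, LinearEquiv.symm_apply_apply]
      simp [hg₀, h2, hq, Submodule.liftQ_apply]
    -- Hahn-Banach extension
    obtain ⟨g, hgext, hgle⟩ := exists_extension_of_le_sublinear
      ⟨LinearMap.range pm, g₀⟩ (gauge W)
      (fun c hc x => gauge_smul_of_nonneg hc.le x)
      (gauge_add_le hWc hWabs)
      (by
        rintro ⟨y, x, rfl⟩
        calc g₀ ⟨pm x, LinearMap.mem_range_self pm x⟩ = lam x := hg₀app x
          _ ≤ gauge W (pm x) := hbound x)
    -- |g y| ≤ gauge W y
    have hWsymm : ∀ y ∈ W, -y ∈ W := fun y hy => by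
      simpa using hWb.smul_mem (a := (-1 : ℝ)) (by norm_num) hy
    have habs : ∀ y, |g y| ≤ gauge W y := by
      intro y
      refine abs_le.2 ⟨?_, hgle y⟩
      have := hgle (-y)
      rw [map_neg, gauge_neg hWsymm] at this
      linarith
    -- continuity of g
    have hgcont : Continuous g := by
      refine continuous_of_continuousAt_zero g ?_
      rw [ContinuousAt, map_zero]
      rw [Metric.tendsto_nhds]
      intro ε hε
      have hhalf : (0:ℝ) < ε/2 := by positivity
      have hnb : (ε/2) • W ∈ 𝓝 (0 : 𝒳 k) := by
        have := set_smul_mem_nhds_zero_iff (s := W) (c := ε/2) hhalf.ne'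
        exact this.2 hW𝓝
      filter_upwards [hnb] with y hy
      have : gauge W y ≤ ε/2 := gauge_le_of_mem hhalf.le hy
      have := (habs y).trans this
      rw [Real.dist_eq, sub_zero]
      linarith
    refine ⟨k, ⟨g, hgcont⟩, fun x => ?_⟩
    have : g (pm x) = g₀ ⟨pm x, LinearMap.mem_range_self pm x⟩ :=
      hgext ⟨pm x, LinearMap.mem_range_self pm x⟩
    rw [show projLimit.proj f k x = pm x from rfl]
    simp only [ContinuousLinearMap.coe_mk', this, hg₀app x]
  · intro i lamᵢ
    have hcont : Continuous fun x : projLimit f => (x : ∀ j, 𝒳 j) i :=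
      (continuous_apply i).comp continuous_subtype_val
    exact ⟨lamᵢ.comp ⟨(LinearMap.proj i).comp (projLimit f).subtype, hcont⟩, fun x => rfl⟩


end
end

section
/- Let 𝒳 be a real vector space, (𝒳₁, τ₁, ℱ₁) a locally measurable vector space whose topology τ₁ is locally convex, and f₁ : 𝒳 → 𝒳₁ a linear map. Equip 𝒳 with the initial topology τ and the initial σ-algebra ℱ with respect to f₁. Let (Z_n)_{n≥1} be ℱ-measurable 𝒳-valued random variables and (v_n) positive reals diverging to +∞. Let s, s̄, p (resp. s₁, s̄₁, p₁) be the entropy, entropy superior, and pressure of (Z_n, v_n) (resp. of (f₁(Z_n), v_n)). Then s = s₁ ∘ f₁, s̄ = s̄₁ ∘ f₁, and p* = p₁* ∘ f₁, where * denotes the Fenchel–Legendre transform. In particular, if s₁ = s̄₁ then s = s̄, and if s̄₁ = −p₁* then s̄ = −p*. -/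
open Filter MeasureTheory Topology

noncomputable section

/-- The entropy of the sequence `(Z_n, v_n)`: infimum, over the measurable neighborhoods `V`
of `x`, of `liminf (1/v_n) log P(Z_n ∈ V)`. -/
def entropy {X Ω : Type*} (t : TopologicalSpace X) (F : MeasurableSpace X)
    [MeasurableSpace Ω] (P : Measure Ω) (Z : ℕ → Ω → X) (v : ℕ → ℝ) (x : X) : EReal :=
  ⨅ V ∈ {V : Set X | V ∈ @nhds X t x ∧ MeasurableSet[F] V},
    liminf (fun n => (((v n)⁻¹ : ℝ) : EReal) * ENNReal.log (P (Z n ⁻¹' V))) atTop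

/-- The entropy superior of the sequence `(Z_n, v_n)`. -/
def entropySup {X Ω : Type*} (t : TopologicalSpace X) (F : MeasurableSpace X)
    [MeasurableSpace Ω] (P : Measure Ω) (Z : ℕ → Ω → X) (v : ℕ → ℝ) (x : X) : EReal :=
  ⨅ V ∈ {V : Set X | V ∈ @nhds X t x ∧ MeasurableSet[F] V},
    limsup (fun n => (((v n)⁻¹ : ℝ) : EReal) * ENNReal.log (P (Z n ⁻¹' V))) atTop

/-- The pressure of the sequence `(Z_n, v_n)`, evaluated on a linear functional:
`p(λ) = limsup (1/v_n) log E[exp(v_n λ(Z_n))]`. -/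
def pressure {X Ω : Type*} [AddCommGroup X] [Module ℝ X] [MeasurableSpace Ω]
    (P : Measure Ω) (Z : ℕ → Ω → X) (v : ℕ → ℝ) (l : X →ₗ[ℝ] ℝ) : EReal :=
  limsup (fun n => (((v n)⁻¹ : ℝ) : EReal) *
    ENNReal.log (∫⁻ ω, ENNReal.ofReal (Real.exp (v n * l (Z n ω))) ∂P)) atTop

/-- The Fenchel-Legendre transform of the pressure:
`p*(x) = sup over continuous linear functionals λ of (λ(x) − p(λ))`. -/
def pressureStar {X Ω : Type*} [AddCommGroup X] [Module ℝ X] (t : TopologicalSpace X)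
    [MeasurableSpace Ω] (P : Measure Ω) (Z : ℕ → Ω → X) (v : ℕ → ℝ) (x : X) : EReal :=
  ⨆ l ∈ {l : X →ₗ[ℝ] ℝ | @Continuous X ℝ t _ l}, ((l x : EReal) - pressure P Z v l)

theorem factorTest {X X₁ : Type*} [AddCommGroup X] [Module ℝ X]
    [AddCommGroup X₁] [Module ℝ X₁] [TopologicalSpace X₁]
    [IsTopologicalAddGroup X₁] [ContinuousSMul ℝ X₁] [LocallyConvexSpace ℝ X₁]
    (f₁ : X →ₗ[ℝ] X₁) (l : X →ₗ[ℝ] ℝ)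
    (hl : @Continuous X ℝ (TopologicalSpace.induced f₁ inferInstance) _ l) :
    ∃ l₁ : X₁ →ₗ[ℝ] ℝ, Continuous l₁ ∧ ∀ y : X, l₁ (f₁ y) = l y := by
  have hball : {r : ℝ | |r| < 1} ∈ 𝓝 (0 : ℝ) := by
    have := Metric.ball_mem_nhds (0 : ℝ) one_pos
    simpa [Metric.ball, Real.dist_eq] using this
  letI tX : TopologicalSpace X := TopologicalSpace.induced f₁ inferInstance
  have hl' : Continuous (⇑l) := hl
  have h0 : {y : X | |l y| < 1} ∈ 𝓝 (0 : X) := by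
    have ht := hl'.tendsto 0
    rw [map_zero] at ht
    exact ht hball
  rw [show (𝓝 (0 : X)) = Filter.comap f₁ (𝓝 (f₁ 0)) from nhds_induced f₁ 0, map_zero] at h0
  obtain ⟨U, hU, hUl⟩ := Filter.mem_comap.mp h0
  obtain ⟨C, ⟨hCn, hCb, hCc⟩, hCU⟩ := (nhds_hasBasis_absConvex ℝ X₁).mem_iff.mp hU
  have habs : Absorbent ℝ C := absorbent_nhds_zero hCn
  have hbnd : ∀ y : X, |l y| ≤ gauge C (f₁ y) := by
    intro y
    unfold gauge
    refine le_csInf habs.gauge_set_nonempty ?_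
    rintro r ⟨hr, hmem⟩
    have h1 : r⁻¹ • f₁ y ∈ C := (Set.mem_smul_set_iff_inv_smul_mem₀ hr.ne' _ _).mp hmem
    have h2 : r⁻¹ • y ∈ f₁ ⁻¹' U := by
      have : f₁ (r⁻¹ • y) = r⁻¹ • f₁ y := LinearMap.map_smul f₁ _ _
      exact Set.mem_preimage.mpr (this ▸ hCU h1)
    have h3 : |l (r⁻¹ • y)| < 1 := hUl h2
    rw [LinearMap.map_smul, smul_eq_mul, abs_mul, abs_of_pos (inv_pos.mpr hr),
      inv_mul_lt_iff₀ hr, mul_one] at h3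
    exact h3.le
  have hker : ∀ y ∈ LinearMap.ker f₁, y ∈ LinearMap.ker l := by
    intro y hy
    rw [LinearMap.mem_ker] at hy ⊢
    have := hbnd y
    rw [hy, gauge_zero] at this
    exact abs_nonpos_iff.mp this
  set l₀ : (X ⧸ LinearMap.ker f₁) →ₗ[ℝ] ℝ := (LinearMap.ker f₁).liftQ l hker with hl₀
  set e := f₁.quotKerEquivRange with he
  set h : LinearMap.range f₁ →ₗ[ℝ] ℝ := l₀.comp e.symm.toLinearMap with hhdef
  have hh : ∀ y : X, h ⟨f₁ y, LinearMap.mem_range_self f₁ y⟩ = l y := by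
    intro y
    have h1 : e (Submodule.Quotient.mk y) = ⟨f₁ y, LinearMap.mem_range_self f₁ y⟩ :=
      Subtype.ext (f₁.quotKerEquivRange_apply_mk y)
    have h2 : e.symm ⟨f₁ y, LinearMap.mem_range_self f₁ y⟩ = Submodule.Quotient.mk y := by
      rw [← h1, LinearEquiv.symm_apply_apply]
    simp [hhdef, h2, hl₀, Submodule.liftQ_apply]
  set f' : X₁ →ₗ.[ℝ] ℝ := ⟨LinearMap.range f₁, h⟩ with hf'
  have hfN : ∀ z : f'.domain, f' z ≤ gauge C z := by
    rintro ⟨z, hz⟩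
    obtain ⟨y, rfl⟩ := hz
    calc f' ⟨f₁ y, ⟨y, rfl⟩⟩ = l y := hh y
    _ ≤ |l y| := le_abs_self _
    _ ≤ gauge C (f₁ y) := hbnd y
  obtain ⟨g, hg, hgle⟩ := exists_extension_of_le_sublinear f' (gauge C)
    (fun c hc x => by rw [gauge_smul_of_nonneg hc.le, smul_eq_mul]) (gauge_add_le hCc habs) hfN
  have hgabs : ∀ z, |g z| ≤ gauge C z := by
    intro z
    refine abs_le.mpr ⟨?_, hgle z⟩
    have : g (-z) ≤ gauge C (-z) := hgle (-z)
    rw [map_neg, gauge_neg (fun x hx => hCb.neg_mem_iff.mpr hx)] at this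
    linarith
  have hg0 : Filter.Tendsto g (𝓝 0) (𝓝 0) := by
    refine squeeze_zero_norm (fun z => by simpa [Real.norm_eq_abs] using hgabs z) ?_
    have := (continuous_gauge hCc hCn).tendsto 0
    rwa [gauge_zero] at this
  have hgc : Continuous g := by
    refine continuous_of_continuousAt_zero g.toAddMonoidHom ?_
    have : ContinuousAt (⇑g) 0 := by rw [ContinuousAt, map_zero]; exact hg0
    exact this
  exact ⟨g, hgc, fun y => (hg ⟨f₁ y, LinearMap.mem_range_self f₁ y⟩).trans (hh y)⟩

/-- Linear inverse contraction principle for the entropies and the Fenchel-Legendre transform of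
the pressure: with `𝒳` equipped with the initial topology and initial σ-algebra with respect to
a linear map `f₁` into a locally convex locally measurable vector space `𝒳₁`, one has
`s = s₁ ∘ f₁`, `s̄ = s̄₁ ∘ f₁` and `p* = p₁* ∘ f₁`; in particular `s₁ = s̄₁` implies `s = s̄`
and `s̄₁ = −p₁*` implies `s̄ = −p*`. -/
theorem stmt3 {X X₁ : Type*} [AddCommGroup X] [Module ℝ X]
    [AddCommGroup X₁] [Module ℝ X₁] [TopologicalSpace X₁]
    [IsTopologicalAddGroup X₁] [ContinuousSMul ℝ X₁] [LocallyConvexSpace ℝ X₁]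
    [MeasurableSpace X₁]
    -- `(𝒳₁, τ₁, ℱ₁)` is a locally measurable vector space:
    (hLM1 : ∀ x : X₁, ∀ U ∈ 𝓝 x, ∃ V ∈ 𝓝 x, V ⊆ U ∧ MeasurableSet V)
    (hLM2 : ∀ l : X₁ →L[ℝ] ℝ, Measurable fun x => l x)
    (f₁ : X →ₗ[ℝ] X₁)
    -- the initial topology and initial σ-algebra on `𝒳` with respect to `f₁`:
    (t : TopologicalSpace X) (F : MeasurableSpace X)
    (ht : t = TopologicalSpace.induced f₁ inferInstance)
    (hF : F = MeasurableSpace.comap f₁ inferInstance)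
    {Ω : Type*} [MeasurableSpace Ω] (P : Measure Ω) [IsProbabilityMeasure P]
    (Z : ℕ → Ω → X) (hZ : ∀ n, Measurable[_, F] (Z n))
    (v : ℕ → ℝ) (hv : ∀ n, 0 < v n) (hvtop : Tendsto v atTop atTop) :
    (∀ x : X, entropy t F P Z v x =
      entropy inferInstance inferInstance P (fun n ω => f₁ (Z n ω)) v (f₁ x)) ∧
    (∀ x : X, entropySup t F P Z v x =
      entropySup inferInstance inferInstance P (fun n ω => f₁ (Z n ω)) v (f₁ x)) ∧
    (∀ x : X, pressureStar t P Z v x =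
      pressureStar inferInstance P (fun n ω => f₁ (Z n ω)) v (f₁ x)) ∧
    ((∀ y : X₁, entropy inferInstance inferInstance P (fun n ω => f₁ (Z n ω)) v y =
        entropySup inferInstance inferInstance P (fun n ω => f₁ (Z n ω)) v y) →
      ∀ x : X, entropy t F P Z v x = entropySup t F P Z v x) ∧
    ((∀ y : X₁, entropySup inferInstance inferInstance P (fun n ω => f₁ (Z n ω)) v y =
        - pressureStar inferInstance P (fun n ω => f₁ (Z n ω)) v y) →
      ∀ x : X, entropySup t F P Z v x = - pressureStar t P Z v x) := by

  subst ht hF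
  have hnhds : ∀ x : X, @nhds X (TopologicalSpace.induced f₁ inferInstance) x
      = Filter.comap f₁ (𝓝 (f₁ x)) := fun x => nhds_induced f₁ x
  -- key infimum transport lemma
  have key : ∀ (L : (ℕ → EReal) → EReal),
      (∀ u w : ℕ → EReal, (∀ n, u n ≤ w n) → L u ≤ L w) → ∀ x : X,
      (⨅ V ∈ {V : Set X | V ∈ @nhds X (TopologicalSpace.induced f₁ inferInstance) x ∧
          MeasurableSet[MeasurableSpace.comap f₁ inferInstance] V},
        L (fun n => (((v n)⁻¹ : ℝ) : EReal) * ENNReal.log (P (Z n ⁻¹' V))))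
      = ⨅ W ∈ {W : Set X₁ | W ∈ 𝓝 (f₁ x) ∧ MeasurableSet W},
        L (fun n => (((v n)⁻¹ : ℝ) : EReal) *
          ENNReal.log (P ((fun ω => f₁ (Z n ω)) ⁻¹' W))) := by
    intro L hL x
    apply le_antisymm
    · refine le_iInf₂ fun W hW => ?_
      refine iInf₂_le_of_le (f₁ ⁻¹' W) ⟨?_, ?_⟩ (le_of_eq rfl)
      · rw [hnhds x]; exact Filter.preimage_mem_comap hW.1
      · exact ⟨W, hW.2, rfl⟩
    · refine le_iInf₂ fun V hV => ?_
      obtain ⟨U, hU, hUV⟩ := Filter.mem_comap.mp ((hnhds x) ▸ hV.1)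
      obtain ⟨W, hW, hWU, hWm⟩ := hLM1 (f₁ x) U hU
      refine iInf₂_le_of_le W ⟨hW, hWm⟩ (hL _ _ fun n => ?_)
      have hsub : (fun ω => f₁ (Z n ω)) ⁻¹' W ⊆ Z n ⁻¹' V := fun ω hω => hUV (hWU hω)
      exact mul_le_mul_of_nonneg_left (ENNReal.log_monotone (measure_mono hsub))
        (by exact_mod_cast inv_nonneg.mpr (hv n).le)
  have h1 : ∀ x : X, entropy (TopologicalSpace.induced f₁ inferInstance)
      (MeasurableSpace.comap f₁ inferInstance) P Z v x =
      entropy inferInstance inferInstance P (fun n ω => f₁ (Z n ω)) v (f₁ x) := fun x =>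
    key (fun u => liminf u atTop)
      (fun u w h => liminf_le_liminf (Eventually.of_forall h)) x
  have h2 : ∀ x : X, entropySup (TopologicalSpace.induced f₁ inferInstance)
      (MeasurableSpace.comap f₁ inferInstance) P Z v x =
      entropySup inferInstance inferInstance P (fun n ω => f₁ (Z n ω)) v (f₁ x) := fun x =>
    key (fun u => limsup u atTop)
      (fun u w h => limsup_le_limsup (Eventually.of_forall h)) x
  have hpress : ∀ (l : X →ₗ[ℝ] ℝ) (l₁ : X₁ →ₗ[ℝ] ℝ), (∀ y, l₁ (f₁ y) = l y) →
      pressure P Z v l = pressure P (fun n ω => f₁ (Z n ω)) v l₁ := by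
    intro l l₁ hc
    unfold pressure
    simp_rw [hc]
  have h3 : ∀ x : X, pressureStar (TopologicalSpace.induced f₁ inferInstance) P Z v x =
      pressureStar inferInstance P (fun n ω => f₁ (Z n ω)) v (f₁ x) := by
    intro x
    unfold pressureStar
    apply le_antisymm
    · refine iSup₂_le fun l hl => ?_
      obtain ⟨l₁, hl₁c, hl₁⟩ := factorTest f₁ l hl
      refine le_iSup₂_of_le l₁ hl₁c (le_of_eq ?_)
      rw [hl₁ x, hpress l l₁ hl₁]
    · refine iSup₂_le fun l₁ hl₁c => ?_
      refine le_iSup₂_of_le (l₁ ∘ₗ f₁)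
        (by letI : TopologicalSpace X := TopologicalSpace.induced f₁ inferInstance
            exact (show Continuous (⇑l₁) from hl₁c).comp continuous_induced_dom)
        (le_of_eq ?_)
      rw [hpress (l₁ ∘ₗ f₁) l₁ (fun y => rfl)]
      rfl
  refine ⟨h1, h2, h3, ?_, ?_⟩
  · intro hyp x
    rw [h1 x, h2 x, hyp (f₁ x)]
  · intro hyp x
    rw [h2 x, hyp (f₁ x), h3 x]


end
end

section
/- Let 𝒳 be a real vector space, (𝒳₁, τ₁, ℱ₁) a locally measurable vector space, and f₁ : 𝒳 → 𝒳₁ a linear map. Equip 𝒳 with the initial topology τ and initial σ-algebra ℱ with respect to f₁. Let (Z_n)_{n≥1} be ℱ-measurable 𝒳-valued random variables and (v_n) positive reals diverging to +∞. If the sequence (f₁(Z_n), v_n) satisfies a weak large deviation principle (with its entropy s₁), and every compact subset of 𝒳₁ is ℱ₁-measurable, then the sequence (Z_n, v_n) satisfies a weak large deviation principle (with its entropy s). -/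
open Filter MeasureTheory Topology

noncomputable section

/-- The weak large deviation principle for the sequence `(Z_n, v_n)`, with rate given by its
entropy: lower bound on the interior of every measurable set, and upper bound on the closure of
every relatively compact measurable set. -/
def WLDP {X Ω : Type*} (t : TopologicalSpace X) (F : MeasurableSpace X)
    [MeasurableSpace Ω] (P : Measure Ω) (Z : ℕ → Ω → X) (v : ℕ → ℝ) : Prop :=
  (∀ A : Set X, MeasurableSet[F] A →
    (⨆ x ∈ @interior X t A, entropy t F P Z v x) ≤
      liminf (fun n => (((v n)⁻¹ : ℝ) : EReal) * ENNReal.log (P (Z n ⁻¹' A))) atTop) ∧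
  (∀ K : Set X, MeasurableSet[F] K → IsCompact (@closure X t K) →
    limsup (fun n => (((v n)⁻¹ : ℝ) : EReal) * ENNReal.log (P (Z n ⁻¹' K))) atTop ≤
      ⨆ x ∈ @closure X t K, entropy t F P Z v x)

/-- Linear inverse contraction principle for weak large deviation principles: if `𝒳` carries the
initial topology and σ-algebra with respect to a linear map `f₁` into a locally measurable vector
space `𝒳₁`, if `(f₁(Z_n), v_n)` satisfies a weak large deviation principle and if every compact
subset of `𝒳₁` is measurable, then `(Z_n, v_n)` satisfies a weak large deviation principle. -/
theorem stmt4 {X X₁ : Type*} [AddCommGroup X] [Module ℝ X]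
    [AddCommGroup X₁] [Module ℝ X₁] [TopologicalSpace X₁]
    [IsTopologicalAddGroup X₁] [ContinuousSMul ℝ X₁] [MeasurableSpace X₁]
    -- `(𝒳₁, τ₁, ℱ₁)` is a locally measurable vector space:
    (hLM1 : ∀ x : X₁, ∀ U ∈ 𝓝 x, ∃ V ∈ 𝓝 x, V ⊆ U ∧ MeasurableSet V)
    (hLM2 : ∀ l : X₁ →L[ℝ] ℝ, Measurable fun x => l x)
    (f₁ : X →ₗ[ℝ] X₁)
    -- the initial topology and initial σ-algebra on `𝒳` with respect to `f₁`:
    (t : TopologicalSpace X) (F : MeasurableSpace X)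
    (ht : t = TopologicalSpace.induced f₁ inferInstance)
    (hF : F = MeasurableSpace.comap f₁ inferInstance)
    {Ω : Type*} [MeasurableSpace Ω] (P : Measure Ω) [IsProbabilityMeasure P]
    (Z : ℕ → Ω → X) (hZ : ∀ n, Measurable[_, F] (Z n))
    (v : ℕ → ℝ) (hv : ∀ n, 0 < v n) (hvtop : Tendsto v atTop atTop)
    -- `(f₁(Z_n), v_n)` satisfies a weak large deviation principle:
    (hWLDP₁ : WLDP inferInstance inferInstance P (fun n ω => f₁ (Z n ω)) v)
    -- every compact subset of `𝒳₁` is measurable: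
    (hcompact : ∀ K : Set X₁, IsCompact K → MeasurableSet K) :
    WLDP t F P Z v := by
  subst ht hF
  letI : TopologicalSpace X := TopologicalSpace.induced f₁ inferInstance
  letI : MeasurableSpace X := MeasurableSpace.comap f₁ inferInstance
  have hcont : Continuous[TopologicalSpace.induced f₁ inferInstance, _] f₁ :=
    continuous_induced_dom
  -- key entropy comparison: s₁(f₁ x) ≤ s(x)
  have hkey : ∀ x : X,
      entropy inferInstance inferInstance P (fun n ω => f₁ (Z n ω)) v (f₁ x) ≤
        entropy (TopologicalSpace.induced f₁ inferInstance)
          (MeasurableSpace.comap f₁ inferInstance) P Z v x := by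
    intro x
    refine le_iInf₂ fun V hV => ?_
    obtain ⟨hVnhds, hVmeas⟩ := hV
    rw [mem_nhds_induced] at hVnhds
    obtain ⟨U, hU, hUV⟩ := hVnhds
    obtain ⟨V₁, hV₁n, hV₁U, hV₁m⟩ := hLM1 (f₁ x) U hU
    refine le_trans (iInf₂_le V₁ ⟨hV₁n, hV₁m⟩) ?_
    refine liminf_le_liminf (Eventually.of_forall fun n => ?_)
    refine mul_le_mul_of_nonneg_left ?_ ?_
    · rw [ENNReal.log_le_log_iff]
      refine measure_mono fun ω hω => ?_
      exact hUV (hV₁U hω)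
    · exact_mod_cast le_of_lt (inv_pos.mpr (hv n))
  constructor
  · -- lower bound: trivial since A is a measurable neighborhood of each point of its interior
    intro A hA
    refine iSup₂_le fun x hx => ?_
    exact iInf₂_le A ⟨mem_interior_iff_mem_nhds.mp hx, hA⟩
  · -- upper bound
    intro K hK hKc
    set C : Set X₁ := f₁ '' (@closure X (TopologicalSpace.induced f₁ inferInstance) K)
      with hCdef
    have hCcomp : IsCompact C := hKc.image hcont
    have hCm : MeasurableSet C := hcompact C hCcomp
    have h2 := hWLDP₁.2 C hCm hCcomp.closure
    refine le_trans (le_trans ?_ h2) ?_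
    · -- limsup comparison
      refine limsup_le_limsup (Eventually.of_forall fun n => ?_)
      refine mul_le_mul_of_nonneg_left ?_ ?_
      · rw [ENNReal.log_le_log_iff]
        refine measure_mono fun ω hω => ?_
        exact ⟨Z n ω, subset_closure hω, rfl⟩
      · exact_mod_cast le_of_lt (inv_pos.mpr (hv n))
    · -- sup over closure C of s₁ ≤ sup over closure K of s
      refine iSup₂_le fun y hy => ?_
      obtain ⟨z, hzC, hins⟩ := hCcomp.mem_closure_iff_exists_inseparable.mp hy
      obtain ⟨x, hxK, rfl⟩ := hzC
      refine le_trans ?_ (le_iSup₂ (f := fun x _ =>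
        entropy (TopologicalSpace.induced f₁ inferInstance)
          (MeasurableSpace.comap f₁ inferInstance) P Z v x) x hxK)
      refine le_trans ?_ (hkey x)
      -- entropy at y equals entropy at f₁ x since Inseparable (f₁ x) y
      have hnhds : 𝓝 (f₁ x) = 𝓝 y := hins
      unfold entropy
      rw [hnhds]
    

end
end

section
/- Let (I,≤) be a directed preordered set; for each i ∈ I let (𝒳_i, τ_i, ℱ_i) be a locally measurable vector space; for i ≤ j let f_{i,j} : 𝒳_j → 𝒳_i be measurable, continuous, linear maps with f_{i,i} = id and f_{i,k} = f_{i,j} ∘ f_{j,k} for i ≤ j ≤ k. Let 𝒳 be the projective limit { x ∈ ∏_i 𝒳_i : f_{i,j}(x_j) = x_i for all i ≤ j } with projections f_i, equipped with the initial topology and initial σ-algebra ℱ with respect to (f_i)_{i∈I}. Let (Z_n)_{n≥1} be ℱ-measurable 𝒳-valued random variables and (v_n) positive reals diverging to +∞. If for every i ∈ I the sequence (f_i(Z_n), v_n) satisfies a weak large deviation principle (with its entropy s_i) and every compact subset of 𝒳_i is ℱ_i-measurable, then (Z_n, v_n) satisfies a weak large deviation principle (with its entropy s). -/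
open Filter MeasureTheory Topology

noncomputable section

variable {I : Type*} [Preorder I] {𝒳 : I → Type*} [∀ i, AddCommGroup (𝒳 i)]
  [∀ i, Module ℝ (𝒳 i)] [∀ i, TopologicalSpace (𝒳 i)]

/-- The initial σ-algebra on the projective limit with respect to the projections. -/
def projLimit.sigma [∀ i, MeasurableSpace (𝒳 i)] (f : ∀ i j, i ≤ j → 𝒳 j →L[ℝ] 𝒳 i) :
    MeasurableSpace (projLimit f) :=
  ⨆ i, MeasurableSpace.comap (projLimit.proj f i) inferInstance

lemma aux_compat (f : ∀ i j, i ≤ j → 𝒳 j →L[ℝ] 𝒳 i) (x : projLimit f) (i j : I) (h : i ≤ j) :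
    f i j h (projLimit.proj f j x) = projLimit.proj f i x := x.2 i j h

lemma aux_proj_cont (f : ∀ i j, i ≤ j → 𝒳 j →L[ℝ] 𝒳 i) (i : I) :
    Continuous (projLimit.proj f i) :=
  (continuous_apply i).comp continuous_subtype_val

lemma aux_nhds (f : ∀ i j, i ≤ j → 𝒳 j →L[ℝ] 𝒳 i) (x : projLimit f) :
    𝓝 x = Filter.comap Subtype.val (𝓝 (x : ∀ i, 𝒳 i)) := nhds_induced _ _

lemma aux_basis [IsDirected I (· ≤ ·)] [Nonempty I] (f : ∀ i j, i ≤ j → 𝒳 j →L[ℝ] 𝒳 i)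
    (x : projLimit f) (U : Set (projLimit f)) (hU : U ∈ 𝓝 x) :
    ∃ (k : I) (W : Set (𝒳 k)), W ∈ 𝓝 (projLimit.proj f k x) ∧
      projLimit.proj f k ⁻¹' W ⊆ U := by
  classical
  rw [aux_nhds, Filter.mem_comap] at hU
  obtain ⟨u, hu, husub⟩ := hU
  rw [nhds_pi] at hu
  obtain ⟨s, hsfin, t, ht, hsub⟩ := Filter.mem_pi.mp hu
  obtain ⟨k, hk⟩ := hsfin.toFinset.exists_le
  refine ⟨k, ⋂ i ∈ hsfin.toFinset, (if h : i ≤ k then f i k h ⁻¹' t i else Set.univ), ?_, ?_⟩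
  · refine (Filter.biInter_finset_mem _).2 fun i hi => ?_
    rw [dif_pos (hk i hi)]
    refine ((f i k (hk i hi)).continuous.continuousAt).preimage_mem_nhds ?_
    rw [aux_compat f x i k (hk i hi)]
    exact ht i
  · intro y hy
    apply husub
    refine hsub ?_
    intro i hi
    have hi' : i ∈ hsfin.toFinset := hsfin.mem_toFinset.2 hi
    have h2 := Set.mem_iInter₂.mp hy i hi'
    rw [dif_pos (hk i hi')] at h2
    rw [Set.mem_preimage, aux_compat f y i k (hk i hi')] at h2
    exact h2

lemma aux_proj_meas [∀ i, MeasurableSpace (𝒳 i)] (f : ∀ i j, i ≤ j → 𝒳 j →L[ℝ] 𝒳 i) (i : I) :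
    Measurable[projLimit.sigma f] (projLimit.proj f i) :=
  Measurable.of_comap_le (le_iSup (fun i => MeasurableSpace.comap (projLimit.proj f i) inferInstance) i)

lemma aux_LM1 [IsDirected I (· ≤ ·)] [∀ i, MeasurableSpace (𝒳 i)]
    (hLM1 : ∀ (i : I) (x : 𝒳 i), ∀ U ∈ 𝓝 x, ∃ V ∈ 𝓝 x, V ⊆ U ∧ MeasurableSet V)
    (f : ∀ i j, i ≤ j → 𝒳 j →L[ℝ] 𝒳 i) (x : projLimit f) (U : Set (projLimit f))
    (hU : U ∈ 𝓝 x) :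
    ∃ V, V ∈ 𝓝 x ∧ MeasurableSet[projLimit.sigma f] V ∧ V ⊆ U := by
  rcases isEmpty_or_nonempty I with hI | hI
  · have hsub : Subsingleton (projLimit f) :=
      ⟨fun a b => Subtype.ext (funext fun i => isEmptyElim i)⟩
    have hUuniv : U = Set.univ := Set.eq_univ_of_forall fun y => by
      rw [Subsingleton.elim y x]; exact mem_of_mem_nhds hU
    exact ⟨Set.univ, Filter.univ_mem, MeasurableSet.univ, hUuniv ▸ subset_rfl⟩
  · obtain ⟨k, W, hW, hWU⟩ := aux_basis f x U hU
    obtain ⟨V, hV, hVW, hVmeas⟩ := hLM1 k _ W hW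
    exact ⟨projLimit.proj f k ⁻¹' V,
      (aux_proj_cont f k).continuousAt.preimage_mem_nhds hV,
      aux_proj_meas f k hVmeas,
      (Set.preimage_mono hVW).trans hWU⟩

lemma aux_liminf_mono {Ω : Type*} [MeasurableSpace Ω] (P : Measure Ω) (v : ℕ → ℝ)
    (hv : ∀ n, 0 < v n) (A B : ℕ → Set Ω) (h : ∀ n, A n ⊆ B n) :
    liminf (fun n => (((v n)⁻¹ : ℝ) : EReal) * ENNReal.log (P (A n))) atTop ≤
      liminf (fun n => (((v n)⁻¹ : ℝ) : EReal) * ENNReal.log (P (B n))) atTop :=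
  liminf_le_liminf (Filter.Eventually.of_forall fun n =>
    mul_le_mul_of_nonneg_left (ENNReal.log_monotone (measure_mono (h n)))
      (by exact_mod_cast (inv_pos.mpr (hv n)).le))

lemma aux_limsup_mono {Ω : Type*} [MeasurableSpace Ω] (P : Measure Ω) (v : ℕ → ℝ)
    (hv : ∀ n, 0 < v n) (A B : ℕ → Set Ω) (h : ∀ n, A n ⊆ B n) :
    limsup (fun n => (((v n)⁻¹ : ℝ) : EReal) * ENNReal.log (P (A n))) atTop ≤
      limsup (fun n => (((v n)⁻¹ : ℝ) : EReal) * ENNReal.log (P (B n))) atTop :=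
  limsup_le_limsup (Filter.Eventually.of_forall fun n =>
    mul_le_mul_of_nonneg_left (ENNReal.log_monotone (measure_mono (h n)))
      (by exact_mod_cast (inv_pos.mpr (hv n)).le))

lemma aux_pre {Ω : Type*} (f : ∀ i j, i ≤ j → 𝒳 j →L[ℝ] 𝒳 i) {i j : I} (h : i ≤ j)
    (Z : Ω → projLimit f) (W : Set (𝒳 i)) :
    (fun ω => projLimit.proj f j (Z ω)) ⁻¹' (f i j h ⁻¹' W) =
      (fun ω => projLimit.proj f i (Z ω)) ⁻¹' W := by
  ext ω
  simp [Set.mem_preimage, aux_compat f (Z ω) i j h]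

/-- Linear Dawson–Gärtner theorem for weak large deviation principles: if, for every `i`, the
sequence `(f_i(Z_n), v_n)` satisfies a weak large deviation principle and every compact subset of
`𝒳 i` is measurable, then `(Z_n, v_n)` satisfies a weak large deviation principle on the
projective limit. -/
theorem stmt6
    [IsDirected I (· ≤ ·)]
    [∀ i, IsTopologicalAddGroup (𝒳 i)] [∀ i, ContinuousSMul ℝ (𝒳 i)]
    [∀ i, MeasurableSpace (𝒳 i)]
    -- each `(𝒳 i, τ i, ℱ i)` is a locally measurable vector space:
    (hLM1 : ∀ (i : I) (x : 𝒳 i), ∀ U ∈ 𝓝 x, ∃ V ∈ 𝓝 x, V ⊆ U ∧ MeasurableSet V)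
    (hLM2 : ∀ (i : I) (l : 𝒳 i →L[ℝ] ℝ), Measurable fun x => l x)
    -- the (continuous linear) bonding maps, measurable, forming a projective system:
    (f : ∀ i j, i ≤ j → 𝒳 j →L[ℝ] 𝒳 i)
    (hfmeas : ∀ (i j : I) (h : i ≤ j), Measurable (f i j h))
    (hfid : ∀ (i : I) (h : i ≤ i), f i i h = ContinuousLinearMap.id ℝ (𝒳 i))
    (hfcomp : ∀ (i j k : I) (hij : i ≤ j) (hjk : j ≤ k),
      f i k (hij.trans hjk) = (f i j hij).comp (f j k hjk))
    {Ω : Type*} [MeasurableSpace Ω] (P : Measure Ω) [IsProbabilityMeasure P]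
    (Z : ℕ → Ω → projLimit f) (hZ : ∀ n, Measurable[_, projLimit.sigma f] (Z n))
    (v : ℕ → ℝ) (hv : ∀ n, 0 < v n) (hvtop : Tendsto v atTop atTop)
    -- for every `i`, `(f_i(Z_n), v_n)` satisfies a weak large deviation principle:
    (hWLDPi : ∀ i : I, WLDP inferInstance inferInstance P
      (fun n ω => projLimit.proj f i (Z n ω)) v)
    -- every compact subset of each `𝒳 i` is measurable:
    (hcompact : ∀ (i : I) (K : Set (𝒳 i)), IsCompact K → MeasurableSet K) :
    WLDP inferInstance (projLimit.sigma f) P Z v := by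
  classical
  refine ⟨?_, ?_⟩
  · -- lower bound
    intro A hA
    refine iSup₂_le fun x hx => ?_
    obtain ⟨V, hV𝓝, hVmeas, hVA⟩ := aux_LM1 hLM1 f x A (mem_interior_iff_mem_nhds.mp hx)
    refine le_trans (iInf₂_le V ⟨hV𝓝, hVmeas⟩) ?_
    exact aux_liminf_mono P v hv _ _ fun n => Set.preimage_mono hVA
  · -- upper bound
    intro K hK hKc
    rcases K.eq_empty_or_nonempty with rfl | ⟨x₀, hx₀⟩
    · have hbot : ∀ n : ℕ, (((v n)⁻¹ : ℝ) : EReal) * ENNReal.log (P (Z n ⁻¹' (∅ : Set (projLimit f)))) = ⊥ := fun n => by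
        rw [Set.preimage_empty, measure_empty, ENNReal.log_zero,
          EReal.mul_bot_of_pos (by exact_mod_cast inv_pos.mpr (hv n))]
      refine le_trans (le_of_eq ?_) bot_le
      rw [funext hbot, limsup_const]
    rcases isEmpty_or_nonempty I with hI | hI
    · -- degenerate case: the projective limit is a singleton
      have hsub : Subsingleton (projLimit f) :=
        ⟨fun a b => Subtype.ext (funext fun i => isEmptyElim i)⟩
      have hxK : x₀ ∈ closure K := subset_closure hx₀
      have hKuniv : ∀ n : ℕ, Z n ⁻¹' K = Set.univ := fun n =>
        Set.eq_univ_of_forall fun ω => by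
          show Z n ω ∈ K
          rw [Subsingleton.elim (Z n ω) x₀]; exact hx₀
      have hterm : ∀ n : ℕ, (((v n)⁻¹ : ℝ) : EReal) * ENNReal.log (P (Z n ⁻¹' K)) = 0 := fun n => by
        rw [hKuniv n, measure_univ, ENNReal.log_one, mul_zero]
      have hLHS : limsup (fun n => (((v n)⁻¹ : ℝ) : EReal) * ENNReal.log (P (Z n ⁻¹' K))) atTop = 0 := by
        rw [funext hterm, limsup_const]
      have h0 : (0 : EReal) ≤ entropy inferInstance (projLimit.sigma f) P Z v x₀ := by
        refine le_iInf₂ fun V hV => ?_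
        have hVuniv : V = Set.univ := Set.eq_univ_of_forall fun y => by
          rw [Subsingleton.elim y x₀]; exact mem_of_mem_nhds hV.1
        have : ∀ n : ℕ, (((v n)⁻¹ : ℝ) : EReal) * ENNReal.log (P (Z n ⁻¹' V)) = 0 := fun n => by
          rw [hVuniv, Set.preimage_univ, measure_univ, ENNReal.log_one, mul_zero]
        rw [funext this, liminf_const]
      rw [hLHS]
      exact le_iSup₂_of_le x₀ hxK h0
    · -- main case
      refine le_of_forall_gt_imp_ge_of_dense fun α hα => ?_
      have key : ∀ x ∈ closure K, ∃ (j : I) (W N : Set (𝒳 j)), MeasurableSet W ∧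
          N ∈ 𝓝 (projLimit.proj f j x) ∧ IsClosed N ∧ N ⊆ interior W ∧
          liminf (fun n => (((v n)⁻¹ : ℝ) : EReal) *
            ENNReal.log (P ((fun ω => projLimit.proj f j (Z n ω)) ⁻¹' W))) atTop < α := by
        intro x hx
        have hex : entropy inferInstance (projLimit.sigma f) P Z v x < α :=
          lt_of_le_of_lt (le_iSup₂ (f := fun x (_ : x ∈ closure K) =>
            entropy inferInstance (projLimit.sigma f) P Z v x) x hx) hα
        rw [entropy, iInf_lt_iff] at hex
        obtain ⟨V, hVlt⟩ := hex
        rw [iInf_lt_iff] at hVlt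
        obtain ⟨⟨hV𝓝, hVmeas⟩, hVlt⟩ := hVlt
        obtain ⟨k, W0, hW0, hW0V⟩ := aux_basis f x V hV𝓝
        obtain ⟨W, hW𝓝, hWsub, hWmeas⟩ := hLM1 k _ W0 hW0
        obtain ⟨N, ⟨hN𝓝, hNcl⟩, hNsub⟩ :=
          (closed_nhds_basis (projLimit.proj f k x)).mem_iff.1 (interior_mem_nhds.2 hW𝓝)
        refine ⟨k, W, N, hWmeas, hN𝓝, hNcl, hNsub, lt_of_le_of_lt ?_ hVlt⟩
        exact aux_liminf_mono P v hv _ _ fun n ω hω => hW0V (hWsub hω)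
      choose! j W N hWmeas hN𝓝 hNcl hNW hWα using key
      obtain ⟨T, hT, hcover⟩ := hKc.elim_nhds_subcover
        (fun x => projLimit.proj f (j x) ⁻¹' interior (N x))
        (fun x hx => (aux_proj_cont f (j x)).continuousAt.preimage_mem_nhds
          (interior_mem_nhds.2 (hN𝓝 x hx)))
      obtain ⟨k, hk⟩ := (T.image j).exists_le
      have hk' : ∀ x ∈ T, j x ≤ k := fun x hx => hk _ (Finset.mem_image_of_mem j hx)
      set H : Set (𝒳 k) := ⋃ x ∈ T, (if h : j x ≤ k then f (j x) k h ⁻¹' N x else ∅) with hH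
      have hHcl : IsClosed H := by
        refine Set.Finite.isClosed_biUnion T.finite_toSet fun x hx => ?_
        rw [dif_pos (hk' x hx)]
        exact (hNcl x (hT x hx)).preimage (f (j x) k _).continuous
      have hCH : projLimit.proj f k '' closure K ⊆ H := by
        rintro - ⟨y, hy, rfl⟩
        obtain ⟨x, hxT, hyx⟩ : ∃ x ∈ T, y ∈ projLimit.proj f (j x) ⁻¹' interior (N x) := by
          simpa using hcover hy
        refine Set.mem_biUnion hxT ?_
        rw [dif_pos (hk' x hxT)]
        show f (j x) k _ (projLimit.proj f k y) ∈ N x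
        rw [aux_compat f y _ _ (hk' x hxT)]
        exact interior_subset hyx
      have hHent : ∀ z ∈ H, entropy inferInstance inferInstance P
          (fun n ω => projLimit.proj f k (Z n ω)) v z ≤ α := by
        intro z hz
        rw [hH, Set.mem_iUnion₂] at hz
        obtain ⟨x, hxT, hzx⟩ := hz
        rw [dif_pos (hk' x hxT)] at hzx
        have hxLs := hT x hxT
        have hnb : f (j x) k (hk' x hxT) ⁻¹' W x ∈ 𝓝 z :=
          mem_nhds_iff.2 ⟨f (j x) k (hk' x hxT) ⁻¹' interior (W x),
            Set.preimage_mono interior_subset,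
            isOpen_interior.preimage (f _ _ _).continuous,
            hNW x hxLs hzx⟩
        rw [entropy]
        refine le_trans (iInf₂_le _ ⟨hnb, hfmeas _ _ _ (hWmeas x hxLs)⟩) ?_
        refine le_of_lt (lt_of_le_of_lt (le_of_eq ?_) (hWα x hxLs))
        congr 1
        funext n
        rw [aux_pre f (hk' x hxT) (Z n) (W x)]
      have hCcomp : IsCompact (projLimit.proj f k '' closure K) := hKc.image (aux_proj_cont f k)
      have hCc : IsCompact (closure (projLimit.proj f k '' closure K)) := hCcomp.closure
      have hCmeas := hcompact k _ hCc
      have hup := (hWLDPi k).2 (closure (projLimit.proj f k '' closure K)) hCmeas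
        (by rwa [closure_closure])
      refine le_trans ?_ (le_trans hup ?_)
      · refine aux_limsup_mono P v hv _ _ fun n ω hω => ?_
        exact subset_closure ⟨Z n ω, subset_closure hω, rfl⟩
      · rw [closure_closure]
        refine iSup₂_le fun z hz => ?_
        exact hHent z (closure_minimal hCH hHcl hz)


end
end

section
/- Let (𝒳, τ, ℱ) be a locally measurable vector space, (Z_n)_{n≥1} a sequence of ℱ-measurable 𝒳-valued random variables, and (v_n) positive reals diverging to +∞, with entropy superior s̄. Then for every ℱ-measurable set K ⊆ 𝒳 whose closure is compact, limsup_n (1/v_n) log P(Z_n ∈ K) ≤ sup_{x ∈ closure(K)} s̄(x). -/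
open Filter MeasureTheory Topology

noncomputable section

open scoped ENNReal

/-- The compact upper bound: on a locally measurable vector space, for every measurable set `K`
with compact closure, `limsup (1/v_n) log P(Z_n ∈ K) ≤ sup_{x ∈ closure K} s̄(x)`. -/
theorem stmt8 {X : Type*}
    [AddCommGroup X] [Module ℝ X] [TopologicalSpace X]
    [IsTopologicalAddGroup X] [ContinuousSMul ℝ X] [MeasurableSpace X]
    -- `(𝒳, τ, ℱ)` is a locally measurable vector space:
    (hLM1 : ∀ x : X, ∀ U ∈ 𝓝 x, ∃ V ∈ 𝓝 x, V ⊆ U ∧ MeasurableSet V)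
    (hLM2 : ∀ l : X →L[ℝ] ℝ, Measurable fun x => l x)
    {Ω : Type*} [MeasurableSpace Ω] (P : Measure Ω) [IsProbabilityMeasure P]
    (Z : ℕ → Ω → X) (hZ : ∀ n, Measurable (Z n))
    (v : ℕ → ℝ) (hv : ∀ n, 0 < v n) (hvtop : Tendsto v atTop atTop) :
    ∀ K : Set X, MeasurableSet K → IsCompact (closure K) →
      limsup (fun n => (((v n)⁻¹ : ℝ) : EReal) * ENNReal.log (P (Z n ⁻¹' K))) atTop ≤
        ⨆ x ∈ closure K, entropySup inferInstance inferInstance P Z v x := by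
  intro K hKmeas hK
  refine le_of_forall_gt_imp_ge_of_dense fun c hc => ?_
  have hx : ∀ x ∈ closure K, ∃ V, V ∈ 𝓝 x ∧
      limsup (fun n => (((v n)⁻¹ : ℝ) : EReal) * ENNReal.log (P (Z n ⁻¹' V))) atTop < c := by
    intro x hxK
    have h1 : entropySup inferInstance inferInstance P Z v x < c :=
      lt_of_le_of_lt (le_biSup _ hxK) hc
    simp only [entropySup, Set.mem_setOf_eq, iInf_lt_iff, exists_prop] at h1
    obtain ⟨V, ⟨hV1, _⟩, hV3⟩ := h1
    exact ⟨V, hV1, hV3⟩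
  choose! V hV hVlt using hx
  obtain ⟨t, hts, hcov⟩ := hK.elim_nhds_subcover V fun x hxK => hV x hxK
  rcases t.eq_empty_or_nonempty with rfl | ht
  · have hKe : K = ∅ := Set.subset_empty_iff.1 (subset_closure.trans (by simpa using hcov))
    have heq : (fun n => (((v n)⁻¹ : ℝ) : EReal) * ENNReal.log (P (Z n ⁻¹' K)))
        = fun _ => (⊥ : EReal) := by
      funext n
      rw [hKe]
      simp only [Set.preimage_empty, measure_empty, ENNReal.log_zero]
      exact EReal.coe_mul_bot_of_pos (inv_pos.2 (hv n))
    rw [heq, limsup_const]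
    exact bot_le
  · set g : X → ℕ → EReal :=
      fun i n => (((v n)⁻¹ : ℝ) : EReal) * ENNReal.log (P (Z n ⁻¹' V i)) with hg
    set A : ℕ → EReal := fun n => (((v n)⁻¹ * Real.log t.card : ℝ) : EReal) with hA
    set B : ℕ → EReal := fun n => t.sup' ht (fun i => g i n) with hB
    have key : ∀ n, (((v n)⁻¹ : ℝ) : EReal) * ENNReal.log (P (Z n ⁻¹' K)) ≤ A n + B n := by
      intro n
      have hsub : Z n ⁻¹' K ⊆ ⋃ i ∈ t, Z n ⁻¹' V i := by
        intro ω hω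
        have := hcov (subset_closure hω)
        simpa using this
      obtain ⟨j, hj, hjeq⟩ := Finset.exists_mem_eq_sup' ht (fun i => P (Z n ⁻¹' V i))
      have h1 : P (Z n ⁻¹' K) ≤ (t.card : ℝ≥0∞) * P (Z n ⁻¹' V j) := by
        calc P (Z n ⁻¹' K) ≤ ∑ i ∈ t, P (Z n ⁻¹' V i) :=
              (measure_mono hsub).trans (MeasureTheory.measure_biUnion_finset_le (μ := P) t fun i => Z n ⁻¹' V i)
          _ ≤ t.card • (t.sup' ht fun i => P (Z n ⁻¹' V i)) :=
              Finset.sum_le_card_nsmul t _ _ fun i hi => Finset.le_sup' (fun i => P (Z n ⁻¹' V i)) hi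
          _ = (t.card : ℝ≥0∞) * P (Z n ⁻¹' V j) := by rw [nsmul_eq_mul, hjeq]
      have hlog : ENNReal.log (P (Z n ⁻¹' K)) ≤
          ((Real.log t.card : ℝ) : EReal) + ENNReal.log (P (Z n ⁻¹' V j)) := by
        have hcard0 : (t.card : ℝ≥0∞) ≠ 0 := by
          simpa using ht.card_pos.ne'
        have hcard : ENNReal.log ((t.card : ℝ≥0∞)) = ((Real.log t.card : ℝ) : EReal) := by
          rw [ENNReal.log_pos_real hcard0 (ENNReal.natCast_ne_top _)]
          simp
        rw [← hcard, ← ENNReal.log_mul_add]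
        exact ENNReal.log_monotone h1
      have hmul : (((v n)⁻¹ : ℝ) : EReal) *
          (((Real.log t.card : ℝ) : EReal) + ENNReal.log (P (Z n ⁻¹' V j)))
          ≤ A n + g j n := by
        rcases eq_or_ne (ENNReal.log (P (Z n ⁻¹' V j))) ⊥ with hbot | hbot
        · rw [hbot, EReal.add_bot, EReal.coe_mul_bot_of_pos (inv_pos.2 (hv n))]
          exact bot_le
        · have h01 : P (Z n ⁻¹' V j) ≤ 1 := prob_le_one
          have hne : ENNReal.log (P (Z n ⁻¹' V j)) ≠ ⊤ := by
            intro htop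
            have h2 := ENNReal.log_le_zero_iff.2 h01
            rw [htop] at h2
            exact absurd h2 (by simp)
          obtain ⟨y, hy⟩ : ∃ y : ℝ, ENNReal.log (P (Z n ⁻¹' V j)) = (y : EReal) :=
            ⟨(ENNReal.log (P (Z n ⁻¹' V j))).toReal, (EReal.coe_toReal hne hbot).symm⟩
          simp only [hg, hA, hy]
          norm_cast
          rw [mul_add]
      calc (((v n)⁻¹ : ℝ) : EReal) * ENNReal.log (P (Z n ⁻¹' K))
          ≤ (((v n)⁻¹ : ℝ) : EReal) *
            (((Real.log t.card : ℝ) : EReal) + ENNReal.log (P (Z n ⁻¹' V j))) := by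
            exact mul_le_mul_of_nonneg_left hlog (by exact_mod_cast (inv_pos.2 (hv n)).le)
        _ ≤ A n + g j n := hmul
        _ ≤ A n + B n := by
            gcongr
            exact Finset.le_sup' (fun i => g i n) hj
    have hA0 : Tendsto A atTop (𝓝 (0 : EReal)) := by
      rw [hA]
      have h0 : Tendsto (fun n => (v n)⁻¹ * Real.log t.card) atTop (𝓝 0) := by
        simpa using hvtop.inv_tendsto_atTop.mul_const (Real.log t.card)
      simpa using EReal.tendsto_coe.2 h0
    have hAlim : limsup A atTop = 0 := hA0.limsup_eq
    have hBlim : limsup B atTop ≤ c := by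
      rw [hB]
      rw [limsup_finset_sup' ht]
      exact Finset.sup'_le ht _ fun i hi => (hVlt i (hts i hi)).le
    calc limsup (fun n => (((v n)⁻¹ : ℝ) : EReal) * ENNReal.log (P (Z n ⁻¹' K))) atTop
        ≤ limsup (fun n => A n + B n) atTop :=
          limsup_le_limsup (Eventually.of_forall key)
      _ ≤ limsup A atTop + limsup B atTop :=
          EReal.limsup_add_le (Or.inl (by rw [hAlim]; simp))
            (Or.inl (by rw [hAlim]; simp))
      _ = limsup B atTop := by rw [hAlim, zero_add]
      _ ≤ c := hBlim

end
end

section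
/- Let 𝒩 be a measurable normed space, i.e. a real normed space with its Borel σ-algebra such that addition is measurable with respect to the product σ-algebra Borel(𝒩)⊗Borel(𝒩). Let κ be the density of 𝒩, i.e. the smallest cardinal of a dense subset of 𝒩, and let S be any set of cardinality κ. Then the product of the full power-set σ-algebras on S equals the full power-set σ-algebra on S × S: 𝔓(S × S) = 𝔓(S) ⊗ 𝔓(S), i.e. every subset of S × S belongs to the σ-algebra generated by rectangles A × B with A, B ⊆ S. -/
/-! A dense subset `D` of `N` can be taken to be a countable union of bounded, uniformly separated
sets (maximal `1/(n+1)`-separated subsets of the balls of radius `n + 1`). For separated `Y₁`,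
bounded separated `Y₂` and small `δ > 0`, the map `(a, b) ↦ a + δ • b` is `Borel ⊗ Borel`-measurable
because addition is, and it spreads `Y₁ × Y₂` out to a uniformly separated set, all of whose subsets
are closed. Pulling them back shows that every subset of `Y₁ × Y₂`, hence of `D × D`, lies in
`Borel ⊗ Borel`. Since `S` injects into `D`, every subset of `S × S` lies in `𝔓(S) ⊗ 𝔓(S)`. -/

open MeasureTheory Topology

noncomputable section

/-- The density of a topological space: the smallest cardinality of a dense subset. -/
def density (N : Type*) [TopologicalSpace N] : Cardinal :=
  ⨅ D : {D : Set N // Dense D}, Cardinal.mk D.1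

open Metric Set

section MetricSpace

variable {X : Type*} [MetricSpace X]

theorem exists_pairwise_le_dist_subset_forall_exists_dist_lt (B : Set X) {ε : ℝ} (hε : 0 < ε) :
    ∃ Y ⊆ B, Y.Pairwise (ε ≤ dist · ·) ∧ ∀ x ∈ B, ∃ y ∈ Y, dist x y < ε := by
  obtain ⟨Y, hY⟩ := zorn_subset {Y : Set X | Y ⊆ B ∧ Y.Pairwise (ε ≤ dist · ·)} fun c hc hchain =>
    ⟨⋃₀ c, ⟨sUnion_subset fun Y hY => (hc hY).1,
      (pairwise_sUnion hchain.directedOn).2 fun Y hY => (hc hY).2⟩,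
      fun _ => subset_sUnion_of_mem⟩
  refine ⟨Y, hY.prop.1, hY.prop.2, fun x hx => ?_⟩
  by_contra! hfar
  have hxY : x ∉ Y := fun hxY => (hfar x hxY).not_gt (by simpa using hε)
  have hins : insert x Y ⊆ B ∧ (insert x Y).Pairwise (ε ≤ dist · ·) :=
    ⟨insert_subset hx hY.prop.1, pairwise_insert.2
      ⟨hY.prop.2, fun y hy _ => ⟨hfar y hy, dist_comm x y ▸ hfar y hy⟩⟩⟩
  exact hxY (hY.eq_of_subset hins (subset_insert x Y) ▸ mem_insert x Y)

theorem exists_dense_iUnion_pairwise_le_dist (c : X) :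
    ∃ Y : ℕ → Set X, Dense (⋃ n, Y n) ∧
      ∀ n, Bornology.IsBounded (Y n) ∧ (Y n).Pairwise (1 / (n + 1 : ℝ) ≤ dist · ·) := by
  choose Y hYball hYsep hYnet using fun n : ℕ =>
    exists_pairwise_le_dist_subset_forall_exists_dist_lt (closedBall c (n + 1))
      (Nat.one_div_pos_of_nat (α := ℝ) (n := n))
  refine ⟨Y, Metric.dense_iff.2 fun x r hr => ?_,
    fun n => ⟨isBounded_closedBall.subset (hYball n), hYsep n⟩⟩
  obtain ⟨k, hk⟩ := exists_nat_one_div_lt hr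
  obtain ⟨m, hm⟩ := exists_nat_ge (dist x c)
  obtain ⟨y, hy, hxy⟩ := hYnet (max k m) x <| mem_closedBall.2 <| by
    have : (m : ℝ) ≤ max k m := by exact_mod_cast le_max_right k m
    linarith
  refine ⟨y, mem_ball'.2 ?_, mem_iUnion_of_mem _ hy⟩
  calc dist x y < 1 / (max k m + 1 : ℕ) := by exact_mod_cast hxy
    _ ≤ 1 / (k + 1) := by exact_mod_cast Nat.one_div_le_one_div (le_max_left k m)
    _ < r := hk

end MetricSpace

theorem measurableSet_of_subset_of_pairwise_le_dist {α β : Type*} [MeasurableSpace α]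
    [MetricSpace β] [MeasurableSpace β] [OpensMeasurableSpace β] {f : α → β} (hf : Measurable f)
    {s : Set α} (hs : MeasurableSet s) {ε : ℝ} (hε : 0 < ε)
    (hsep : s.Pairwise fun p q => ε ≤ dist (f p) (f q)) {t : Set α} (ht : t ⊆ s) :
    MeasurableSet t := by
  have hinj : InjOn f s := fun p hp q hq hpq => by
    by_contra hne
    have : ε ≤ dist (f p) (f q) := hsep hp hq hne
    rw [hpq, dist_self] at this
    exact this.not_gt hε
  have hclosed : IsClosed (f '' t) := isClosed_of_pairwise_le_dist hε <| by
    rintro _ ⟨p, hp, rfl⟩ _ ⟨q, hq, rfl⟩ hne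
    exact hsep (ht hp) (ht hq) (ne_of_apply_ne f hne)
  rw [← hinj.preimage_image_inter ht]
  exact (hf hclosed.measurableSet).inter hs

section NormedSpace

variable {E : Type*} [NormedAddCommGroup E] [NormedSpace ℝ E]

theorem pairwise_le_dist_add_smul {Y₁ Y₂ : Set E} {ε₁ ε₂ δ : ℝ} (hδ : 0 < δ)
    (hY₁ : Y₁.Pairwise (ε₁ ≤ dist · ·)) (hY₂ : Y₂.Pairwise (ε₂ ≤ dist · ·))
    (hsmall : ∀ b ∈ Y₂, ∀ d ∈ Y₂, δ * dist b d ≤ ε₁ / 2) :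
    (Y₁ ×ˢ Y₂).Pairwise fun p q =>
      min (ε₁ / 2) (δ * ε₂) ≤ dist (p.1 + δ • p.2) (q.1 + δ • q.2) := by
  rintro ⟨a, b⟩ ⟨ha, hb⟩ ⟨c, d⟩ ⟨hc, hd⟩ hne
  have hsmul : dist (δ • b) (δ • d) = δ * dist b d := by
    rw [dist_smul₀, Real.norm_of_nonneg hδ.le]
  rcases eq_or_ne a c with rfl | hac
  · have hbd : b ≠ d := fun hbd => hne (hbd ▸ rfl)
    calc min (ε₁ / 2) (δ * ε₂) ≤ δ * ε₂ := min_le_right _ _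
      _ ≤ δ * dist b d := mul_le_mul_of_nonneg_left (hY₂ hb hd hbd) hδ.le
      _ = dist (a + δ • b) (a + δ • d) := by rw [dist_add_left, hsmul]
  · have htri : dist a c ≤ dist (a + δ • b) (c + δ • d) + dist (δ • b) (δ • d) := by
      simpa using dist_sub_sub_le (a + δ • b) (δ • b) (c + δ • d) (δ • d)
    have hsep := hY₁ ha hc hac
    have hshift := hsmall b hb d hd
    refine (min_le_left _ _).trans ?_
    linarith

theorem measurableSet_of_subset_prod_of_pairwise_le_dist [MeasurableSpace E] [BorelSpace E]
    (hadd : Measurable fun p : E × E => p.1 + p.2) {Y₁ Y₂ : Set E} {ε₁ ε₂ : ℝ}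
    (hε₁ : 0 < ε₁) (hε₂ : 0 < ε₂) (hY₁ : Y₁.Pairwise (ε₁ ≤ dist · ·))
    (hY₂ : Y₂.Pairwise (ε₂ ≤ dist · ·)) (hbdd : Bornology.IsBounded Y₂) {T : Set (E × E)}
    (hT : T ⊆ Y₁ ×ˢ Y₂) : MeasurableSet T := by
  set δ := ε₁ / (2 * (diam Y₂ + 1))
  have hδ : 0 < δ := by positivity
  have hsmall : ∀ b ∈ Y₂, ∀ d ∈ Y₂, δ * dist b d ≤ ε₁ / 2 := fun b hb d hd =>
    calc δ * dist b d ≤ δ * (diam Y₂ + 1) :=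
          mul_le_mul_of_nonneg_left (by linarith [dist_le_diam_of_mem hbdd hb hd]) hδ.le
      _ = ε₁ / 2 := by simp only [δ]; field_simp
  have hf : Measurable fun p : E × E => p.1 + δ • p.2 :=
    hadd.comp (measurable_fst.prodMk (measurable_snd.const_smul δ))
  exact measurableSet_of_subset_of_pairwise_le_dist hf
    ((isClosed_of_pairwise_le_dist hε₁ hY₁).measurableSet.prod
      (isClosed_of_pairwise_le_dist hε₂ hY₂).measurableSet)
    (lt_min (by positivity) (by positivity)) (pairwise_le_dist_add_smul hδ hY₁ hY₂ hsmall) hT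

theorem exists_dense_forall_subset_prod_measurableSet [MeasurableSpace E] [BorelSpace E]
    (hadd : Measurable fun p : E × E => p.1 + p.2) :
    ∃ D : Set E, Dense D ∧ ∀ T ⊆ D ×ˢ D, MeasurableSet T := by
  obtain ⟨Y, hdense, hY⟩ := exists_dense_iUnion_pairwise_le_dist (0 : E)
  refine ⟨⋃ n, Y n, hdense, fun T hT => ?_⟩
  rw [← inter_eq_left.2 hT, ← iUnion_prod, inter_iUnion]
  exact .iUnion fun nm => measurableSet_of_subset_prod_of_pairwise_le_dist hadd
    Nat.one_div_pos_of_nat Nat.one_div_pos_of_nat (hY nm.1).2 (hY nm.2).2 (hY nm.2).1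
    inter_subset_right

end NormedSpace

/-- If `𝒩` is a measurable normed space (a real normed space with its Borel σ-algebra, such
that addition is measurable for the product σ-algebra `Borel ⊗ Borel`) and `κ` is its density,
then for any set `S` of cardinality `κ` the product of the full power-set σ-algebras on `S`
is the full power-set σ-algebra on `S × S`: every subset of `S × S` is measurable for the
σ-algebra generated by the rectangles. -/
theorem stmt13 {N : Type u} [NormedAddCommGroup N] [NormedSpace ℝ N]
    [MeasurableSpace N] [BorelSpace N]
    (hadd : Measurable fun p : N × N => p.1 + p.2)
    {S : Type u} (hS : Cardinal.mk S = density N) :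
    ∀ T : Set (S × S), MeasurableSet[@Prod.instMeasurableSpace S S ⊤ ⊤] T := by
  let : MeasurableSpace S := ⊤
  obtain ⟨D, hdense, hD⟩ := exists_dense_forall_subset_prod_measurableSet hadd
  have hSD : Cardinal.mk S ≤ Cardinal.mk D :=
    hS ▸ ciInf_le' (fun D : {D : Set N // Dense D} => Cardinal.mk D.1) ⟨D, hdense⟩
  obtain ⟨g⟩ := hSD
  have hg : Function.Injective (Subtype.val ∘ g) := Subtype.val_injective.comp g.injective
  have hG : Function.Injective (Prod.map (Subtype.val ∘ g) (Subtype.val ∘ g)) := hg.prodMap hg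
  intro T
  rw [← hG.preimage_image T]
  refine (measurable_from_top.prodMap measurable_from_top) (hD _ ?_)
  rintro _ ⟨p, -, rfl⟩
  exact ⟨(g p.1).2, (g p.2).2⟩

end
end

section
/- Let 𝒩 be a measurable normed space, i.e. a real normed space with its Borel σ-algebra such that addition is measurable with respect to the product σ-algebra Borel(𝒩)⊗Borel(𝒩). Let κ be the density of 𝒩 and let S be any set of cardinality κ. Then there is no probability measure defined on all subsets of S (the σ-algebra 𝔓(S)) that assigns measure zero to every singleton. -/
open MeasureTheory Topology

noncomputable section

/-!
Let `Y ⊆ S` be a set of positive measure of least cardinality `δ`. It is uncountable because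
singletons are null, and every set of smaller cardinality is null. Index `Y` by the initial
ordinal of `δ`, so that every initial segment has cardinality `< δ ≤ density N`.

A subspace spanned by fewer than `density N` vectors is not dense, so Riesz's lemma gives a
transfinite sequence `x` with each `x i` at distance `≥ 1` from the span of its predecessors.
The differences `x a - x b` with `b < a` then form a `1`-separated, hence closed, set `B`, and
`x s - x t ∈ B ↔ t < s`. Measurability of addition therefore makes the well-order
`{(s, t) | t < s}` on the index set measurable for the discrete σ-algebras, and Fubini computes
its measure under `ν ⊗ ν`, where `ν` is the pullback of `μ`, both as `0` (the slices `{t | t < s}`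
are small) and as `μ(Y)²` (the slices `{s | t < s}` are co-small).
-/

open Set Cardinal Submodule
open scoped Ordinal

theorem mem_span_image_Iio_of_lt {R M ι : Type*} [Semiring R] [AddCommMonoid M] [Module R M]
    [Preorder ι] (x : ι → M) {i j : ι} (h : j < i) : x j ∈ span R (x '' Iio i) :=
  subset_span ⟨j, h, rfl⟩

section FarSequence

variable {N : Type u} [NormedAddCommGroup N] [NormedSpace ℝ N]

theorem density_le_of_dense_span {s : Set N} (hs : Dense (span ℝ s : Set N)) :
    density N ≤ max ℵ₀ #s := by
  let g : List (ℚ × s) → N := fun l => (l.map fun p => (p.1 : ℝ) • (p.2 : N)).sum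
  have hspan : (span ℝ s : Set N) ⊆ closure (range g) := by
    rw [span_eq_iUnion_nat]
    refine iUnion_subset fun n => ?_
    rintro _ ⟨f, hf, rfl⟩
    let G : (Fin n → ℝ × s) → N := fun F => ∑ i, (F i).1 • ((F i).2 : N)
    have hG : Continuous G := by fun_prop
    have hcast : DenseRange (Pi.map fun _ : Fin n => Prod.map ((↑) : ℚ → ℝ) (id : s → s)) :=
      DenseRange.piMap fun _ => Rat.denseRange_cast.prodMap denseRange_id
    refine closure_mono ?_ (hG.range_subset_closure_image_dense hcast
      ⟨fun i => ((f i).1, ⟨(f i).2, hf i⟩), rfl⟩)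
    rintro _ ⟨_, ⟨q, rfl⟩, rfl⟩
    exact ⟨List.ofFn q, by simp [g, G, List.sum_ofFn]⟩
  calc density N ≤ #(range g) := ciInf_le' _
        (⟨range g, dense_closure.mp (hs.mono hspan)⟩ : {D : Set N // Dense D})
    _ ≤ #(List (ℚ × s)) := mk_range_le
    _ ≤ max ℵ₀ #(ℚ × s) := mk_list_le_max _
    _ ≤ max ℵ₀ #s := by
      refine max_le (le_max_left _ _) ?_
      simpa [mk_prod, max_comm] using mul_le_max ℵ₀ #s

theorem exists_one_le_norm_sub_of_mk_lt_density {s : Set N} (hs : #s < density N)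
    (hN : ℵ₀ < density N) : ∃ z : N, ∀ y ∈ span ℝ s, 1 ≤ ‖z - y‖ := by
  have hF : ∃ z, z ∉ (span ℝ s).topologicalClosure := by
    by_contra! h
    have hdense : Dense (span ℝ s : Set N) := fun z => by
      simpa [← topologicalClosure_coe] using h z
    exact (density_le_of_dense_span hdense).not_gt (max_lt hN hs)
  obtain ⟨z, -, hz⟩ := riesz_lemma_of_norm_lt (c := (2 : ℝ)) (R := 3) (by norm_num) (by norm_num)
    (isClosed_topologicalClosure _) hF
  exact ⟨z, fun y hy => hz y (le_topologicalClosure _ hy)⟩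

def FarFromEarlierSpan {ι : Type*} [Preorder ι] (x : ι → N) : Prop :=
  ∀ i, ∀ y ∈ span ℝ (x '' Iio i), 1 ≤ ‖x i - y‖

theorem exists_farFromEarlierSpan {ι : Type u} [LinearOrder ι] [WellFoundedLT ι]
    (hι : ∀ i : ι, #(Iio i) < density N) (hN : ℵ₀ < density N) :
    ∃ x : ι → N, FarFromEarlierSpan x := by
  choose! pick hpick using fun (s : Set N) (hs : #s < density N) =>
    exists_one_le_norm_sub_of_mk_lt_density hs hN
  let x : ι → N := wellFounded_lt.fix fun i ih => pick (range fun j : Iio i => ih j j.2)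
  have hx : ∀ i, x i = pick (x '' Iio i) := fun i => by
    rw [image_eq_range]
    exact wellFounded_lt.fix_eq _ i
  exact ⟨x, fun i => hx i ▸ hpick _ (mk_image_le.trans_lt (hι i))⟩

namespace FarFromEarlierSpan

variable {ι : Type*} [LinearOrder ι] {x : ι → N}

variable (hx : FarFromEarlierSpan x)
include hx

theorem one_le_norm_sub_of_ne {i j : ι} (h : i ≠ j) : 1 ≤ ‖x i - x j‖ := by
  rcases h.lt_or_gt with h | h
  · rw [norm_sub_rev]
    exact hx j _ (mem_span_image_Iio_of_lt x h)
  · exact hx i _ (mem_span_image_Iio_of_lt x h)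

theorem one_le_norm_sub_sub_sub {a b c d : ι} (hab : b < a) (hcd : d < c)
    (hne : (a, b) ≠ (c, d)) :
    1 ≤ ‖(x a - x b) - (x c - x d)‖ := by
  wlog hca : c ≤ a generalizing a b c d
  · rw [norm_sub_rev]
    exact this hcd hab hne.symm (le_of_not_ge hca)
  rcases hca.lt_or_eq with hca | rfl
  · have hmem : x b + x c - x d ∈ span ℝ (x '' Iio a) :=
      sub_mem (add_mem (mem_span_image_Iio_of_lt x hab) (mem_span_image_Iio_of_lt x hca))
        (mem_span_image_Iio_of_lt x (hcd.trans hca))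
    calc 1 ≤ ‖x a - (x b + x c - x d)‖ := hx a _ hmem
      _ = ‖(x a - x b) - (x c - x d)‖ := by congr 1; abel
  · have hbd : d ≠ b := fun h => hne (by rw [h])
    simpa using hx.one_le_norm_sub_of_ne hbd

theorem one_le_norm_sub_add_sub {a b c d : ι} (hab : b < a) (hcd : d < c) :
    1 ≤ ‖(x a - x b) + (x c - x d)‖ := by
  wlog hca : c ≤ a generalizing a b c d
  · rw [add_comm]
    exact this hcd hab (le_of_not_ge hca)
  rcases hca.lt_or_eq with hca | rfl
  · have hmem : x b - x c + x d ∈ span ℝ (x '' Iio a) :=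
      add_mem (sub_mem (mem_span_image_Iio_of_lt x hab) (mem_span_image_Iio_of_lt x hca))
        (mem_span_image_Iio_of_lt x (hcd.trans hca))
    calc 1 ≤ ‖x a - (x b - x c + x d)‖ := hx a _ hmem
      _ = ‖(x a - x b) + (x c - x d)‖ := by congr 1; abel
  · have hmem : (2⁻¹ : ℝ) • (x b + x d) ∈ span ℝ (x '' Iio c) :=
      smul_mem _ _ (add_mem (mem_span_image_Iio_of_lt x hab) (mem_span_image_Iio_of_lt x hcd))
    calc (1 : ℝ) ≤ 2 * ‖x c - (2⁻¹ : ℝ) • (x b + x d)‖ := by linarith [hx c _ hmem]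
      _ = ‖(2 : ℝ) • (x c - (2⁻¹ : ℝ) • (x b + x d))‖ := by rw [norm_smul, Real.norm_two]
      _ = ‖(x c - x b) + (x c - x d)‖ := by
        rw [smul_sub, smul_smul, mul_inv_cancel₀ two_ne_zero, one_smul, two_smul]
        congr 1
        abel

theorem isClosed_image_sub : IsClosed ((fun p : ι × ι => x p.1 - x p.2) '' {p | p.2 < p.1}) :=
  Metric.isClosed_of_pairwise_le_dist zero_lt_one <| by
    rintro _ ⟨⟨a, b⟩, hab, rfl⟩ _ ⟨⟨c, d⟩, hcd, rfl⟩ hne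
    rw [dist_eq_norm]
    exact hx.one_le_norm_sub_sub_sub hab hcd fun h => hne (by rw [h])

theorem sub_mem_image_sub_iff {s t : ι} :
    x s - x t ∈ (fun p : ι × ι => x p.1 - x p.2) '' {p | p.2 < p.1} ↔ t < s := by
  refine ⟨?_, fun h => ⟨(s, t), h, rfl⟩⟩
  rintro ⟨⟨a, b⟩, hab : b < a, heq⟩
  rcases lt_trichotomy t s with h | rfl | h
  · exact h
  · have h1 := hx.one_le_norm_sub_of_ne hab.ne'
    norm_num [heq] at h1
  · have h1 := hx.one_le_norm_sub_add_sub hab h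
    norm_num [heq] at h1

theorem measurableSet_lt [MeasurableSpace N] [BorelSpace N]
    (hadd : Measurable fun p : N × N => p.1 + p.2) [MeasurableSpace ι] (hxm : Measurable x) :
    MeasurableSet {p : ι × ι | p.2 < p.1} := by
  have : {p : ι × ι | p.2 < p.1} = (fun p => (x p.1, -x p.2)) ⁻¹' ((fun q : N × N => q.1 + q.2) ⁻¹'
      ((fun p : ι × ι => x p.1 - x p.2) '' {p | p.2 < p.1})) := by
    ext
    simp [← sub_eq_add_neg, hx.sub_mem_image_sub_iff]
  rw [this]
  exact ((hxm.comp measurable_fst).prodMk (hxm.comp measurable_snd).neg)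
    (hadd hx.isClosed_image_sub.measurableSet)

end FarFromEarlierSpan

end FarSequence

theorem MeasureTheory.Measure.eq_zero_of_measurableSet_lt {ι : Type*} [LinearOrder ι]
    [MeasurableSpace ι] (ν : Measure ι) [SFinite ν] (hlt : MeasurableSet {p : ι × ι | p.2 < p.1})
    (hν : ∀ i, ν (Iic i) = 0) : ν = 0 := by
  have hbelow : ν.prod ν {p | p.2 < p.1} = 0 := by
    have hIio : ∀ i, ν (Iio i) = 0 := fun i => measure_mono_null Iio_subset_Iic_self (hν i)
    rw [Measure.prod_apply hlt]
    exact (lintegral_congr hIio).trans lintegral_zero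
  have habove : ν.prod ν {p | p.2 < p.1} = ν univ * ν univ := by
    have hIoi : ∀ j, ν (Ioi j) = ν univ := fun j =>
      measure_congr (ae_eq_univ.2 (by rw [compl_Ioi]; exact hν j))
    rw [Measure.prod_apply_symm hlt]
    exact (lintegral_congr hIoi).trans (lintegral_const _)
  rw [← Measure.measure_univ_eq_zero, ← mul_self_eq_zero, ← habove, hbelow]

theorem measure_eq_zero_of_measurableSet_lt_of_equiv {S ι : Type u} [MeasurableSpace S]
    [DiscreteMeasurableSpace S] [LinearOrder ι] [MeasurableSpace ι] [DiscreteMeasurableSpace ι]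
    (μ : Measure S) [IsFiniteMeasure μ] {Y : Set S} (e : ι ≃ Y)
    (hmin : ∀ Z : Set S, #Z < #Y → μ Z = 0) (hIic : ∀ i : ι, #(Iic i) < #ι)
    (hlt : MeasurableSet {p : ι × ι | p.2 < p.1}) : μ Y = 0 := by
  let f : ι → S := (↑) ∘ e
  have hf : MeasurableEmbedding f :=
    ⟨Subtype.val_injective.comp e.injective, .of_discrete, fun _ _ => .of_discrete⟩
  have h0 := (μ.comap f).eq_zero_of_measurableSet_lt hlt fun i => by
    rw [hf.comap_apply]
    exact hmin _ (mk_image_le.trans_lt ((hIic i).trans_eq (mk_congr e)))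
  have hrange : f '' univ = Y := by
    rw [image_univ, range_comp, e.range_eq_univ, image_univ, Subtype.range_coe]
  rw [← hrange, ← hf.comap_apply, h0, Measure.coe_zero, Pi.zero_apply]

/-- If `𝒩` is a measurable normed space (a real normed space with its Borel σ-algebra, such
that addition is measurable for the product σ-algebra `Borel ⊗ Borel`) and `κ` is its density,
then for any set `S` of cardinality `κ` there is no probability measure defined on all subsets
of `S` that assigns measure zero to every singleton. -/
theorem stmt14 {N : Type u} [NormedAddCommGroup N] [NormedSpace ℝ N]
    [MeasurableSpace N] [BorelSpace N]
    (hadd : Measurable fun p : N × N => p.1 + p.2)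
    {S : Type u} (hS : Cardinal.mk S = density N) :
    ¬ ∃ μ : @Measure S ⊤, @IsProbabilityMeasure S ⊤ μ ∧ ∀ s : S, μ {s} = 0 := by
  let _ : MeasurableSpace S := ⊤
  rintro ⟨μ, hμ, hsing⟩
  have : NullSingletonClass μ := ⟨hsing⟩
  obtain ⟨Y, hY, hYmin⟩ : ∃ Y : Set S, μ Y ≠ 0 ∧ ∀ Z : Set S, #Z < #Y → μ Z = 0 := by
    obtain ⟨Y, hY, hmin⟩ := (InvImage.wf (fun Y : Set S => #Y) Cardinal.lt_wf).has_min
      {Y | μ Y ≠ 0} ⟨univ, by simp⟩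
    exact ⟨Y, hY, fun Z hZ => not_not.1 fun h => hmin Z h hZ⟩
  have hYinf : ℵ₀ < #Y :=
    lt_of_not_ge fun h => hY ((le_aleph0_iff_set_countable.1 h).measure_zero μ)
  have hYN : #Y ≤ density N := hS ▸ mk_set_le Y
  let ι := (#Y).ord.ToType
  let _ : MeasurableSpace ι := ⊤
  have hι : #ι = #Y := mk_ord_toType _
  have hord : ord #ι = typeLT ι := by simp [ι]
  obtain ⟨x, hx⟩ := exists_farFromEarlierSpan (ι := ι)
    (fun i => (mk_Iio_lt i hord).trans_le (hι.trans_le hYN)) (hYinf.trans_le hYN)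
  exact hY (measure_eq_zero_of_measurableSet_lt_of_equiv μ (Cardinal.eq.1 hι).some hYmin
    (fun i => mk_Iic_lt i hord (hYinf.le.trans_eq hι.symm))
    (hx.measurableSet_lt hadd .of_discrete))

end
end
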